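/- arXiv:2510.04478 — 4 statements merged into one kernel-verified Lean document; each statement's English description precedes it below -/
import Mathlib

section
/- Let Q, R be symmetric positive definite matrices with R ⪰ γ_R I, Q − HᵀR⁻¹H ⪰ γ_Q I, and ‖H‖ ≤ λ_H. Then for every ε ∈ (0,1) with γ' := ε·min{γ_Q, γ_R} satisfying γ_Q − (ε/(1−ε))·(λ_H²/γ_R) ≥ ε γ_Q, the block matrix [[Q, Hᵀ],[H, R]] ⪰ γ'I. -/
open Matrix
open scoped Matrix.Norms.L2Operator MatrixOrder ComplexOrder

/-!
Write `γ = ε min γQ γR`. Since `γ < γR`, the matrix `R - γI` is positive definite, so by the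
Schur complement criterion it suffices to show `Hᵀ (R - γI)⁻¹ H ⪯ Q - γI`. From `R ⪰ γR I` we get
`R - γI ⪰ (1 - ε) R`, hence `(R - γI)⁻¹ ⪯ R⁻¹ / (1 - ε)` because inversion is operator
antitone, and the excess `(ε / (1 - ε)) Hᵀ R⁻¹ H` over `Hᵀ R⁻¹ H` is at most
`(ε / (1 - ε)) (λ_H² / γR) I` because `R⁻¹ ⪯ γR⁻¹ I` and `Hᵀ H ⪯ ‖H‖² I`. Together with
`Hᵀ R⁻¹ H ⪯ Q - γQ I`, the hypothesis on `ε` is exactly what bounds the total by `Q - γI`.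
-/

namespace Matrix

variable {m n 𝕜 : Type*} [Fintype m] [Fintype n] [RCLike 𝕜]

theorem conjTranspose_mul_mul_le_conjTranspose_mul_mul {A B : Matrix n n 𝕜} (hAB : A ≤ B)
    (C : Matrix n m 𝕜) : Cᴴ * A * C ≤ Cᴴ * B * C := by
  rw [le_iff] at hAB ⊢
  simpa only [Matrix.mul_sub, Matrix.sub_mul] using hAB.conjTranspose_mul_mul_same C

theorem dotProduct_star_self_eq_norm_sq (v : n → 𝕜) :
    star v ⬝ᵥ v = ((‖WithLp.toLp 2 v‖ ^ 2 : ℝ) : 𝕜) := by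
  rw [RCLike.ofReal_pow, ← inner_self_eq_norm_sq_to_K, EuclideanSpace.inner_eq_star_dotProduct,
    dotProduct_comm]

variable [DecidableEq n]

theorem conjTranspose_mul_self_le_l2_opNorm_sq (A : Matrix m n 𝕜) :
    Aᴴ * A ≤ (‖A‖ ^ 2 : ℝ) • (1 : Matrix n n 𝕜) := by
  rw [le_iff]
  refine PosSemidef.of_dotProduct_mulVec_nonneg
    ((isHermitian_one.smul (IsSelfAdjoint.all _)).sub (isHermitian_conjTranspose_mul_self A))
    fun x => ?_
  have hAx : ‖WithLp.toLp 2 (A *ᵥ x)‖ ≤ ‖A‖ * ‖WithLp.toLp 2 x‖ := A.l2_opNorm_mulVec _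
  rw [sub_mulVec, dotProduct_sub, smul_mulVec, one_mulVec, dotProduct_smul, ← mulVec_mulVec,
    dotProduct_mulVec, vecMul_conjTranspose, star_star, dotProduct_star_self_eq_norm_sq,
    dotProduct_star_self_eq_norm_sq, RCLike.real_smul_eq_coe_mul, ← RCLike.ofReal_mul,
    ← RCLike.ofReal_sub, RCLike.ofReal_nonneg, sub_nonneg, ← mul_pow]
  exact pow_le_pow_left₀ (norm_nonneg _) hAx 2

theorem PosDef.isUnit_det {A : Matrix n n 𝕜} (hA : A.PosDef) : IsUnit A.det :=
  (isUnit_iff_isUnit_det A).mp hA.isUnit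

theorem inv_smul_of_ne_zero {K : Type*} [Field K] {c : K} (hc : c ≠ 0) {A : Matrix n n K}
    (hA : IsUnit A.det) : (c • A)⁻¹ = c⁻¹ • A⁻¹ :=
  inv_smul' A (Units.mk0 c hc) hA

/-- `A⁻¹ - B⁻¹ = X A X + B⁻¹ (B - A) B⁻¹` with `X = A⁻¹ - B⁻¹`, a sum of two congruences. -/
theorem PosDef.inv_le_inv {A B : Matrix n n 𝕜} (hA : A.PosDef) (hAB : A ≤ B) : B⁻¹ ≤ A⁻¹ := by
  have hB : B.PosDef := by simpa using PosDef.posSemidef_add (le_iff.mp hAB) hA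
  have hX : (A⁻¹ - B⁻¹)ᴴ = A⁻¹ - B⁻¹ := (hA.inv.isHermitian.sub hB.inv.isHermitian).eq
  have key : A⁻¹ - B⁻¹ = (A⁻¹ - B⁻¹)ᴴ * A * (A⁻¹ - B⁻¹) + (B⁻¹)ᴴ * (B - A) * B⁻¹ := by
    rw [hX, hB.inv.isHermitian.eq]
    simp only [Matrix.sub_mul, Matrix.mul_sub, Matrix.mul_assoc, mul_nonsing_inv _ hA.isUnit_det,
      mul_nonsing_inv _ hB.isUnit_det, nonsing_inv_mul_cancel_left _ _ hA.isUnit_det,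
      Matrix.mul_one]
    abel
  rw [le_iff, key]
  exact (hA.posSemidef.conjTranspose_mul_mul_same _).add
    ((le_iff.mp hAB).conjTranspose_mul_mul_same _)

theorem one_sub_smul_le_sub_smul_one {R : Matrix n n 𝕜} {c ε γ : ℝ} (hR : c • 1 ≤ R)
    (hε : 0 ≤ ε) (hγ : γ ≤ ε * c) : (1 - ε) • R ≤ R - γ • 1 := by
  rw [le_sub_iff_add_le]
  calc (1 - ε) • R + γ • 1 ≤ (1 - ε) • R + ε • (c • 1) := by
        rw [smul_smul]
        gcongr
    _ ≤ (1 - ε) • R + ε • R := by gcongr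
    _ = R := by module

theorem fromBlocks_sub_smul_one {l o α : Type*} [DecidableEq l] [DecidableEq o] [Ring α]
    (A : Matrix l l α) (B : Matrix l o α) (C : Matrix o l α) (D : Matrix o o α) (c : α) :
    fromBlocks A B C D - c • 1 = fromBlocks (A - c • 1) B C (D - c • 1) := by
  rw [← fromBlocks_one, fromBlocks_smul, sub_eq_add_neg, fromBlocks_neg, fromBlocks_add]
  simp [sub_eq_add_neg]

variable [DecidableEq m]

theorem transpose_mul_inv_mul_le {R : Matrix m m ℝ} {H : Matrix m n ℝ} {c lamH : ℝ}
    (hc : 0 < c) (hR : c • 1 ≤ R) (hH : ‖H‖ ≤ lamH) : Hᵀ * R⁻¹ * H ≤ (lamH ^ 2 / c) • 1 := by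
  have hRinv : R⁻¹ ≤ c⁻¹ • 1 := by
    simpa [inv_smul_of_ne_zero hc.ne'] using (PosDef.one.smul hc).inv_le_inv hR
  rw [← conjTranspose_eq_transpose_of_trivial]
  calc Hᴴ * R⁻¹ * H ≤ Hᴴ * (c⁻¹ • 1) * H :=
        conjTranspose_mul_mul_le_conjTranspose_mul_mul hRinv H
    _ = c⁻¹ • (Hᴴ * H) := by rw [Matrix.mul_smul, Matrix.smul_mul, Matrix.mul_one]
    _ ≤ c⁻¹ • (‖H‖ ^ 2 • 1) := by gcongr; exact conjTranspose_mul_self_le_l2_opNorm_sq H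
    _ ≤ c⁻¹ • (lamH ^ 2 • 1) := by gcongr
    _ = (lamH ^ 2 / c) • 1 := by rw [smul_smul, inv_mul_eq_div]

theorem transpose_mul_inv_sub_smul_one_mul_le {R : Matrix m m ℝ} {H : Matrix m n ℝ}
    {c lamH ε γ : ℝ} (hR : R.PosDef) (hc : 0 < c) (hRc : c • 1 ≤ R) (hH : ‖H‖ ≤ lamH)
    (hε0 : 0 ≤ ε) (hε1 : ε < 1) (hγ : γ ≤ ε * c) :
    Hᵀ * (R - γ • 1)⁻¹ * H ≤ Hᵀ * R⁻¹ * H + (ε / (1 - ε) * (lamH ^ 2 / c)) • 1 := by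
  have hε1' : 0 < 1 - ε := sub_pos.mpr hε1
  have hinv : (R - γ • 1)⁻¹ ≤ (1 - ε)⁻¹ • R⁻¹ := by
    rw [← inv_smul_of_ne_zero hε1'.ne' hR.isUnit_det]
    exact (hR.smul hε1').inv_le_inv (one_sub_smul_le_sub_smul_one hRc hε0 hγ)
  have hscalar : (1 - ε)⁻¹ = 1 + ε / (1 - ε) := by
    field_simp
    ring
  calc Hᵀ * (R - γ • 1)⁻¹ * H ≤ Hᵀ * ((1 - ε)⁻¹ • R⁻¹) * H := by
        simpa only [conjTranspose_eq_transpose_of_trivial] using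
          conjTranspose_mul_mul_le_conjTranspose_mul_mul hinv H
    _ = Hᵀ * R⁻¹ * H + (ε / (1 - ε)) • (Hᵀ * R⁻¹ * H) := by
        rw [Matrix.mul_smul, Matrix.smul_mul, hscalar, add_smul, one_smul]
    _ ≤ Hᵀ * R⁻¹ * H + (ε / (1 - ε)) • ((lamH ^ 2 / c) • 1) := by
        gcongr
        exact transpose_mul_inv_mul_le hc hRc hH
    _ = Hᵀ * R⁻¹ * H + (ε / (1 - ε) * (lamH ^ 2 / c)) • 1 := by rw [smul_smul]

end Matrix

theorem stmt_1_general {n m : ℕ} (Q : Matrix (Fin n) (Fin n) ℝ) (H : Matrix (Fin m) (Fin n) ℝ)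
    (R : Matrix (Fin m) (Fin m) ℝ) (hR : R.PosDef)
    (γQ γR lamH : ℝ) (hγR : 0 < γR)
    (hRlb : (R - γR • 1).PosSemidef)
    (hSchur : (Q - Hᵀ * R⁻¹ * H - γQ • 1).PosSemidef)
    (hH : ‖H‖ ≤ lamH)
    (ε : ℝ) (hε : ε ∈ Set.Ioo (0 : ℝ) 1)
    (hcond : ε * γQ ≤ γQ - ε / (1 - ε) * (lamH ^ 2 / γR)) :
    (Matrix.fromBlocks Q Hᵀ H R - (ε * min γQ γR) • 1).PosSemidef := by
  obtain ⟨hε0, hε1⟩ := hε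
  set γ := ε * min γQ γR
  have hγR' : γ ≤ ε * γR := mul_le_mul_of_nonneg_left (min_le_right _ _) hε0.le
  have hγQ' : γ ≤ ε * γQ := mul_le_mul_of_nonneg_left (min_le_left _ _) hε0.le
  have hγ_lt : γ < γR := hγR'.trans_lt (mul_lt_of_lt_one_left hγR hε1)
  have hD : (R - γ • 1).PosDef := by
    simpa [sub_add_sub_cancel', sub_smul] using
      PosDef.posSemidef_add hRlb (PosDef.one.smul (sub_pos.mpr hγ_lt))
  have hcomplement : Hᵀ * (R - γ • 1)⁻¹ * H ≤ Q - γ • 1 :=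
    calc Hᵀ * (R - γ • 1)⁻¹ * H ≤ Hᵀ * R⁻¹ * H + (ε / (1 - ε) * (lamH ^ 2 / γR)) • 1 :=
          transpose_mul_inv_sub_smul_one_mul_le hR hγR (le_iff.mpr hRlb) hH hε0.le hε1 hγR'
      _ ≤ (Q - γQ • 1) + (γQ - γ) • 1 := by
          gcongr
          · exact le_iff.mpr (by rwa [sub_right_comm] at hSchur)
          · linarith
      _ = Q - γ • 1 := by module
  have := hD.isUnit.invertible
  have hschur := PosDef.fromBlocks₂₂ (Q - γ • 1) Hᵀ hD
  rw [conjTranspose_eq_transpose_of_trivial, transpose_transpose] at hschur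
  rw [fromBlocks_sub_smul_one, hschur]
  exact le_iff.mp hcomplement

/-- If R ⪰ γ_R I, Q − HᵀR⁻¹H ⪰ γ_Q I, ‖H‖ ≤ λ_H, then for every
ε ∈ (0,1) with γ_Q − (ε/(1−ε))·(λ_H²/γ_R) ≥ ε γ_Q, the block matrix
[[Q, Hᵀ],[H, R]] ⪰ (ε·min{γ_Q,γ_R}) I. -/
theorem stmt_1 {n m : ℕ} (Q : Matrix (Fin n) (Fin n) ℝ) (H : Matrix (Fin m) (Fin n) ℝ)
    (R : Matrix (Fin m) (Fin m) ℝ) (hQ : Q.PosDef) (hR : R.PosDef)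
    (γQ γR lamH : ℝ) (hγQ : 0 < γQ) (hγR : 0 < γR)
    (hRlb : (R - γR • 1).PosSemidef)
    (hSchur : (Q - Hᵀ * R⁻¹ * H - γQ • 1).PosSemidef)
    (hH : ‖H‖ ≤ lamH)
    (ε : ℝ) (hε : ε ∈ Set.Ioo (0 : ℝ) 1)
    (hcond : ε * γQ ≤ γQ - ε / (1 - ε) * (lamH ^ 2 / γR)) :
    (Matrix.fromBlocks Q Hᵀ H R - (ε * min γQ γR) • 1).PosSemidef :=
  stmt_1_general Q H R hR γQ γR lamH hγR hRlb hSchur hH ε hε hcond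
end

section
/- Under ‖A(t)‖ ≤ λ_A and ‖B(t)‖ ≤ λ_B for all t ∈ [t₀, t₀+σ], the controllability Gramian satisfies the upper bound W_{A,B}(t₀,t₁) ⪯ (λ_B²/(2λ_A))(exp(2λ_A σ) − 1) I for every t₁ ∈ [t₀, t₀+σ]. -/
open Matrix Set
open scoped Matrix.Norms.L2Operator

/-- Controllability Gramian. -/
noncomputable def gram {n m : ℕ} (Φ : ℝ → ℝ → Matrix (Fin n) (Fin n) ℝ)
    (B : ℝ → Matrix (Fin n) (Fin m) ℝ) (t₀ t₁ : ℝ) : Matrix (Fin n) (Fin n) ℝ :=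
  ∫ s in t₀..t₁, Φ t₀ s * B s * (B s)ᵀ * (Φ t₀ s)ᵀ

/-!
Read backwards in time from `r = s`, `r ↦ Φ r s` solves `Ẋ = A X` with `X s = 1`, so Grönwall's
inequality gives `‖Φ t₀ s‖ ≤ exp (λ_A (s - t₀))`. The integrand of the Gramian therefore has
operator norm at most `λ_B² exp (2 λ_A (s - t₀))`, whose integral over `[t₀, t₁]` is at most
`c = λ_B² / (2 λ_A) (exp (2 λ_A σ) - 1)`. Finally a symmetric matrix of operator norm at most `c`
lies below `c • 1` in the Loewner order.
-/

theorem norm_le_norm_mul_exp_of_hasDerivAt_mul {R : Type*} [NormedRing R] [NormedSpace ℝ R]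
    {F A : ℝ → R} {a b K : ℝ} (hab : a ≤ b)
    (hF : ∀ t ∈ Icc a b, HasDerivAt F (A t * F t) t) (hA : ∀ t ∈ Icc a b, ‖A t‖ ≤ K) :
    ‖F a‖ ≤ ‖F b‖ * Real.exp (K * (b - a)) := by
  have hmem : ∀ r ∈ Icc 0 (b - a), b - r ∈ Icc a b := fun r hr =>
    ⟨by linarith [hr.2], by linarith [hr.1]⟩
  have hderiv : ∀ r ∈ Icc 0 (b - a),
      HasDerivAt (fun r => F (b - r)) (-(A (b - r) * F (b - r))) r := fun r hr => by
    have h := (hF _ (hmem r hr)).scomp r ((hasDerivAt_id r).const_sub b)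
    rwa [neg_one_smul] at h
  have hbound : ∀ r ∈ Ico 0 (b - a), ‖-(A (b - r) * F (b - r))‖ ≤ K * ‖F (b - r)‖ + 0 :=
    fun r hr => by
      rw [norm_neg, add_zero]
      exact (norm_mul_le _ _).trans <|
        mul_le_mul_of_nonneg_right (hA _ (hmem r (Ico_subset_Icc_self hr))) (norm_nonneg _)
  have := norm_le_gronwallBound_of_norm_deriv_right_le
    (fun r hr => (hderiv r hr).continuousAt.continuousWithinAt)
    (fun r hr => (hderiv r (Ico_subset_Icc_self hr)).hasDerivWithinAt)
    le_rfl hbound (b - a) ⟨sub_nonneg.2 hab, le_rfl⟩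
  rwa [sub_zero, sub_sub_cancel, sub_zero, gronwallBound_ε0] at this

theorem integral_exp_mul_sub {a b k : ℝ} (hk : k ≠ 0) :
    ∫ s in a..b, Real.exp (k * (s - a)) = (Real.exp (k * (b - a)) - 1) / k := by
  simp_rw [mul_sub]
  rw [intervalIntegral.integral_comp_mul_sub (f := Real.exp) hk, integral_exp, sub_self,
    Real.exp_zero, smul_eq_mul, inv_mul_eq_div]

section L2OpNorm

variable {ι : Type*} [Fintype ι] [DecidableEq ι]

theorem Matrix.l2_opNorm_transpose {m : Type*} [Fintype m] [DecidableEq m] (M : Matrix m ι ℝ) :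
    ‖Mᵀ‖ = ‖M‖ := by
  rw [← conjTranspose_eq_transpose_of_trivial, l2_opNorm_conjTranspose]

theorem Matrix.dotProduct_mulVec_le_l2_opNorm_mul (M : Matrix ι ι ℝ) (x : ι → ℝ) :
    x ⬝ᵥ M *ᵥ x ≤ ‖M‖ * (x ⬝ᵥ x) := by
  set y : EuclideanSpace ℝ ι := (EuclideanSpace.equiv ι ℝ).symm x
  have hxx : x ⬝ᵥ x = ‖y‖ ^ 2 := by
    rw [← real_inner_self_eq_norm_sq, EuclideanSpace.inner_eq_star_dotProduct]
    rfl
  calc x ⬝ᵥ M *ᵥ x = inner ℝ ((EuclideanSpace.equiv ι ℝ).symm (M *ᵥ x)) y := by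
        rw [EuclideanSpace.inner_eq_star_dotProduct]; rfl
    _ ≤ ‖(EuclideanSpace.equiv ι ℝ).symm (M *ᵥ x)‖ * ‖y‖ := real_inner_le_norm _ _
    _ ≤ ‖M‖ * ‖y‖ * ‖y‖ := by gcongr; exact l2_opNorm_mulVec M y
    _ = ‖M‖ * (x ⬝ᵥ x) := by rw [hxx]; ring

theorem Matrix.l2_opNorm_one_le : ‖(1 : Matrix ι ι ℝ)‖ ≤ 1 := by
  rw [← l2_opNorm_toEuclideanCLM, map_one]
  exact ContinuousLinearMap.norm_id_le

theorem Matrix.l2_opNorm_mul_mul_transpose_mul_transpose_le {m : Type*} [Fintype m]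
    [DecidableEq m] (P : Matrix ι ι ℝ) (Q : Matrix ι m ℝ) :
    ‖P * Q * Qᵀ * Pᵀ‖ ≤ (‖P‖ * ‖Q‖) ^ 2 := by
  calc ‖P * Q * Qᵀ * Pᵀ‖ ≤ ‖P‖ * ‖Q‖ * ‖Qᵀ‖ * ‖Pᵀ‖ := by
        grw [l2_opNorm_mul, l2_opNorm_mul, l2_opNorm_mul]
    _ = (‖P‖ * ‖Q‖) ^ 2 := by rw [l2_opNorm_transpose, l2_opNorm_transpose]; ring

theorem Matrix.IsHermitian.posSemidef_smul_one_sub_of_l2_opNorm_le {W : Matrix ι ι ℝ}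
    (hW : W.IsHermitian) {c : ℝ} (hc : ‖W‖ ≤ c) : (c • (1 : Matrix ι ι ℝ) - W).PosSemidef := by
  rw [posSemidef_iff_dotProduct_mulVec]
  refine ⟨by simpa [IsHermitian, ← conjTranspose_eq_transpose_of_trivial] using hW.eq, fun x => ?_⟩
  have hxx : 0 ≤ x ⬝ᵥ x := Finset.sum_nonneg fun i _ => mul_self_nonneg (x i)
  simp only [star_trivial, sub_mulVec, smul_mulVec, one_mulVec, dotProduct_sub, dotProduct_smul,
    smul_eq_mul, sub_nonneg]
  exact (W.dotProduct_mulVec_le_l2_opNorm_mul x).trans (mul_le_mul_of_nonneg_right hc hxx)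

theorem Matrix.transpose_intervalIntegral (f : ℝ → Matrix ι ι ℝ) (a b : ℝ) :
    (∫ s in a..b, f s)ᵀ = ∫ s in a..b, (f s)ᵀ := by
  let T : Matrix ι ι ℝ →ₗᵢ[ℝ] Matrix ι ι ℝ :=
    ⟨(transposeLinearEquiv ι ι ℝ ℝ).toLinearMap, l2_opNorm_transpose⟩
  exact (T.intervalIntegral_comp_comm f).symm

end L2OpNorm

theorem gram_isHermitian {n m : ℕ} (Φ : ℝ → ℝ → Matrix (Fin n) (Fin n) ℝ)
    (B : ℝ → Matrix (Fin n) (Fin m) ℝ) (t₀ t₁ : ℝ) : (_root_.gram Φ B t₀ t₁).IsHermitian := by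
  rw [IsHermitian, conjTranspose_eq_transpose_of_trivial, _root_.gram, transpose_intervalIntegral]
  simp only [transpose_mul, transpose_transpose, Matrix.mul_assoc]

theorem stmt_5_general {n m : ℕ} (t₀ σ lamA lamB : ℝ) (hlamA : 0 < lamA)
    (A : ℝ → Matrix (Fin n) (Fin n) ℝ) (B : ℝ → Matrix (Fin n) (Fin m) ℝ)
    (hAb : ∀ t ∈ Icc t₀ (t₀ + σ), ‖A t‖ ≤ lamA)
    (hBb : ∀ t ∈ Icc t₀ (t₀ + σ), ‖B t‖ ≤ lamB)
    (Φ : ℝ → ℝ → Matrix (Fin n) (Fin n) ℝ)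
    (hΦderiv : ∀ s ∈ Icc t₀ (t₀ + σ), ∀ t ∈ Icc t₀ (t₀ + σ),
      HasDerivAt (fun r => Φ r s) (A t * Φ t s) t)
    (hΦinit : ∀ s ∈ Icc t₀ (t₀ + σ), Φ s s = 1) :
    ∀ t₁ ∈ Icc t₀ (t₀ + σ),
      ((lamB ^ 2 / (2 * lamA) * (Real.exp (2 * lamA * σ) - 1)) •
          (1 : Matrix (Fin n) (Fin n) ℝ) - gram Φ B t₀ t₁).PosSemidef := by
  intro t₁ ht₁
  have hΦ : ∀ s ∈ Icc t₀ (t₀ + σ), ‖Φ t₀ s‖ ≤ Real.exp (lamA * (s - t₀)) := fun s hs => by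
    have hsub : Icc t₀ s ⊆ Icc t₀ (t₀ + σ) := Icc_subset_Icc_right hs.2
    have hgronwall := norm_le_norm_mul_exp_of_hasDerivAt_mul hs.1
      (fun t ht => hΦderiv s hs t (hsub ht)) (fun t ht => hAb t (hsub ht))
    rw [hΦinit s hs] at hgronwall
    exact hgronwall.trans (mul_le_of_le_one_left (Real.exp_nonneg _) l2_opNorm_one_le)
  have hintegrand : ∀ s ∈ Icc t₀ (t₀ + σ), ‖Φ t₀ s * B s * (B s)ᵀ * (Φ t₀ s)ᵀ‖ ≤
      lamB ^ 2 * Real.exp (2 * lamA * (s - t₀)) := fun s hs => by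
    calc _ ≤ (Real.exp (lamA * (s - t₀)) * lamB) ^ 2 := by
          grw [l2_opNorm_mul_mul_transpose_mul_transpose_le, hΦ s hs, hBb s hs]
      _ = lamB ^ 2 * Real.exp (2 * lamA * (s - t₀)) := by
          rw [mul_pow, ← Real.exp_nat_mul]; ring_nf
  apply (gram_isHermitian Φ B t₀ t₁).posSemidef_smul_one_sub_of_l2_opNorm_le
  -- No integrability of the integrand is needed: a non-integrable one integrates to `0`.
  calc ‖gram Φ B t₀ t₁‖ ≤ ∫ s in t₀..t₁, lamB ^ 2 * Real.exp (2 * lamA * (s - t₀)) :=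
        intervalIntegral.norm_integral_le_of_norm_le ht₁.1
          (Filter.Eventually.of_forall fun s hs =>
            hintegrand s ⟨hs.1.le, hs.2.trans ht₁.2⟩)
          (Continuous.intervalIntegrable (by fun_prop) _ _)
    _ = lamB ^ 2 / (2 * lamA) * (Real.exp (2 * lamA * (t₁ - t₀)) - 1) := by
        rw [intervalIntegral.integral_const_mul, integral_exp_mul_sub (by positivity)]
        ring
    _ ≤ lamB ^ 2 / (2 * lamA) * (Real.exp (2 * lamA * σ) - 1) := by
        gcongr
        linarith [ht₁.2]

/-- Under ‖A(t)‖ ≤ λ_A and ‖B(t)‖ ≤ λ_B on [t₀, t₀+σ],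
W_{A,B}(t₀,t₁) ⪯ (λ_B²/(2λ_A))(exp(2λ_A σ) − 1) I for every t₁ ∈ [t₀, t₀+σ]. -/
theorem stmt_5 {n m : ℕ} (t₀ σ lamA lamB : ℝ) (hσ : 0 ≤ σ) (hlamA : 0 < lamA)
    (A : ℝ → Matrix (Fin n) (Fin n) ℝ) (B : ℝ → Matrix (Fin n) (Fin m) ℝ)
    (hAc : ContinuousOn A (Icc t₀ (t₀ + σ))) (hBc : ContinuousOn B (Icc t₀ (t₀ + σ)))
    (hAb : ∀ t ∈ Icc t₀ (t₀ + σ), ‖A t‖ ≤ lamA)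
    (hBb : ∀ t ∈ Icc t₀ (t₀ + σ), ‖B t‖ ≤ lamB)
    (Φ : ℝ → ℝ → Matrix (Fin n) (Fin n) ℝ)
    (hΦderiv : ∀ s ∈ Icc t₀ (t₀ + σ), ∀ t ∈ Icc t₀ (t₀ + σ),
      HasDerivAt (fun r => Φ r s) (A t * Φ t s) t)
    (hΦinit : ∀ s ∈ Icc t₀ (t₀ + σ), Φ s s = 1) :
    ∀ t₁ ∈ Icc t₀ (t₀ + σ),
      ((lamB ^ 2 / (2 * lamA) * (Real.exp (2 * lamA * σ) - 1)) •
          (1 : Matrix (Fin n) (Fin n) ℝ) - gram Φ B t₀ t₁).PosSemidef :=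
  stmt_5_general t₀ σ lamA lamB hlamA A B hAb hBb Φ hΦderiv hΦinit
end

section
/- Among all controls u ∈ L²([t₀,t₁]; ℝ^m) steering the system ẋ = A(t)x + B(t)u from v at t₀ to 0 at t₁ (with W = W_{A,B}(t₀,t₁) ≻ 0), the control ū(t) = −B(t)ᵀΦ_A(t₀,t)ᵀ W⁻¹ v attains the minimal squared L² norm, and ∫_{t₀}^{t₁} ‖ū(t)‖² dt = vᵀ W⁻¹ v. -/
/-!
Write `w = W⁻¹ v`, so that `ū = -Bᵀ Φ(t₀,·)ᵀ w`. For every control `u`,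
`∫ ū ⬝ u = -w ⬝ ∫ Φ(t₀,s) B(s) u(s) ds`, and the steering condition, transported back to
time `t₀` by the cocycle law `Φ(t₀,t₁) Φ(t₁,s) = Φ(t₀,s)` (uniqueness for linear ODEs), says
that this last integral is `-v`; hence `∫ ū ⬝ u = w ⬝ v` for every admissible `u`. The control
`ū` is itself admissible, since its integral is `-W w = -v`, which gives `∫ ‖ū‖² = w ⬝ v`, and
expanding `0 ≤ ∫ ‖u - ū‖²` gives minimality.
-/

open Matrix Set MeasureTheory
open scoped Matrix.Norms.L2Operator

theorem linear_ODE_solution_unique {R : Type*} [NormedRing R] [NormedAlgebra ℝ R] {A f g : ℝ → R}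
    (hA : Continuous A) (hf : ∀ t, HasDerivAt f (A t * f t) t)
    (hg : ∀ t, HasDerivAt g (A t * g t) t) {t₀ : ℝ} (heq : f t₀ = g t₀) : f = g := by
  funext t
  obtain ⟨a, b, ht, ht₀⟩ : ∃ a b, t ∈ Ioo a b ∧ t₀ ∈ Ioo a b :=
    ⟨min t t₀ - 1, max t t₀ + 1, by grind, by grind⟩
  obtain ⟨C, hC⟩ := (isCompact_Icc (a := a) (b := b)).exists_bound_of_continuousOn hA.continuousOn
  have hlip : ∀ s ∈ Ioo a b, LipschitzOnWith C.toNNReal (A s * ·) univ := fun s hs =>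
    LipschitzWith.lipschitzOnWith <| LipschitzWith.of_dist_le_mul fun x y => by
      rw [dist_eq_norm, dist_eq_norm, ← mul_sub]
      exact (norm_mul_le _ _).trans <| by
        gcongr; exact (hC s (Ioo_subset_Icc_self hs)).trans (Real.le_coe_toNNReal C)
  exact ODE_solution_unique_of_mem_Ioo hlip ht₀ (fun s _ => ⟨hf s, trivial⟩)
    (fun s _ => ⟨hg s, trivial⟩) heq ht

theorem evolution_mul_evolution {R : Type*} [NormedRing R] [NormedAlgebra ℝ R] {A : ℝ → R}
    {Φ : ℝ → ℝ → R} (hA : Continuous A)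
    (hΦ : ∀ s t, HasDerivAt (fun r => Φ r s) (A t * Φ t s) t) (hΦ₁ : ∀ s, Φ s s = 1)
    (a b c : ℝ) : Φ a b * Φ b c = Φ a c :=
  congrFun (linear_ODE_solution_unique hA (f := fun r => Φ r b * Φ b c)
    (fun t => by simpa only [mul_assoc] using (hΦ b t).mul_const (Φ b c)) (hΦ c) (t₀ := b)
    (by simp only [hΦ₁, one_mul])) a

section IntervalIntegral

variable {a b : ℝ}

theorem ContinuousLinearMap.intervalIntegrable_comp {E F : Type*} [NormedAddCommGroup E]
    [NormedSpace ℝ E] [NormedAddCommGroup F] [NormedSpace ℝ F] (L : E →L[ℝ] F) {f : ℝ → E}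
    (hf : IntervalIntegrable f volume a b) : IntervalIntegrable (fun s => L (f s)) volume a b :=
  ⟨L.integrable_comp hf.1, L.integrable_comp hf.2⟩

variable {ι : Type*} [Fintype ι]

theorem intervalIntegrable_of_posDef_intervalIntegral [DecidableEq ι] {f : ℝ → Matrix ι ι ℝ}
    (h : (∫ s in a..b, f s).PosDef) : IntervalIntegrable f volume a b := by
  by_contra hf
  rw [intervalIntegral.integral_undef hf] at h
  cases isEmpty_or_nonempty ι with
  | inl _ => exact hf (Subsingleton.elim (fun _ => 0) f ▸ intervalIntegrable_const)
  | inr hι => exact (h.diag_pos (i := hι.some)).ne' rfl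

theorem intervalIntegral_mulVec_const [DecidableEq ι] {f : ℝ → Matrix ι ι ℝ}
    (hf : IntervalIntegrable f volume a b) (w : ι → ℝ) :
    ∫ s in a..b, f s *ᵥ w = (∫ s in a..b, f s) *ᵥ w :=
  (LinearMap.toContinuousLinearMap
    ((LinearMap.applyₗ w).comp (toLin' (R := ℝ) (m := ι) (n := ι)).toLinearMap)
    ).intervalIntegral_comp_comm hf

theorem intervalIntegral_const_mulVec_of_mul_eq_one [DecidableEq ι] {M N : Matrix ι ι ℝ}
    (hNM : N * M = 1) (f : ℝ → ι → ℝ) : ∫ s in a..b, M *ᵥ f s = M *ᵥ ∫ s in a..b, f s := by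
  by_cases hf : IntervalIntegrable f volume a b
  · exact (LinearMap.toContinuousLinearMap (toLin' M)).intervalIntegral_comp_comm hf
  · have hMf : ¬IntervalIntegrable (fun s => M *ᵥ f s) volume a b := fun hMf => hf <| by
      simpa only [LinearMap.coe_toContinuousLinearMap', toLin'_apply, mulVec_mulVec, hNM,
        one_mulVec] using (LinearMap.toContinuousLinearMap (toLin' N)).intervalIntegrable_comp hMf
    rw [intervalIntegral.integral_undef hf, intervalIntegral.integral_undef hMf, mulVec_zero]

theorem IntervalIntegrable.const_dotProduct {f : ℝ → ι → ℝ}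
    (hf : IntervalIntegrable f volume a b) (w : ι → ℝ) :
    IntervalIntegrable (fun s => w ⬝ᵥ f s) volume a b :=
  (LinearMap.toContinuousLinearMap (dotProductBilin ℝ ℝ w)).intervalIntegrable_comp hf

theorem intervalIntegral_const_dotProduct {f : ℝ → ι → ℝ}
    (hf : IntervalIntegrable f volume a b) (w : ι → ℝ) :
    ∫ s in a..b, w ⬝ᵥ f s = w ⬝ᵥ ∫ s in a..b, f s :=
  (LinearMap.toContinuousLinearMap (dotProductBilin ℝ ℝ w)).intervalIntegral_comp_comm hf

theorem intervalIntegral_dotProduct_self_le_of_integral_dotProduct_eq (hab : a ≤ b)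
    {u₀ u : ℝ → ι → ℝ} (hu₀ : IntervalIntegrable (fun s => u₀ s ⬝ᵥ u₀ s) volume a b)
    (hu : IntervalIntegrable (fun s => u s ⬝ᵥ u s) volume a b)
    (hu₀u : IntervalIntegrable (fun s => u₀ s ⬝ᵥ u s) volume a b)
    (horth : ∫ s in a..b, u₀ s ⬝ᵥ u s = ∫ s in a..b, u₀ s ⬝ᵥ u₀ s) :
    ∫ s in a..b, u₀ s ⬝ᵥ u₀ s ≤ ∫ s in a..b, u s ⬝ᵥ u s := by
  have hexpand : ∀ s, (u s - u₀ s) ⬝ᵥ (u s - u₀ s)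
      = u s ⬝ᵥ u s - 2 * (u₀ s ⬝ᵥ u s) + u₀ s ⬝ᵥ u₀ s := fun s => by
    rw [sub_dotProduct, dotProduct_sub, dotProduct_sub, dotProduct_comm (u s) (u₀ s)]
    ring
  have hnonneg : 0 ≤ ∫ s in a..b, (u s - u₀ s) ⬝ᵥ (u s - u₀ s) :=
    intervalIntegral.integral_nonneg hab fun s _ => dotProduct_self_star_nonneg (u s - u₀ s)
  simp only [hexpand] at hnonneg
  rw [intervalIntegral.integral_add (hu.sub (hu₀u.const_mul 2)) hu₀,
    intervalIntegral.integral_sub hu (hu₀u.const_mul 2), intervalIntegral.integral_const_mul,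
    horth] at hnonneg
  linarith

end IntervalIntegral

section MinimumEnergy

variable {n m : ℕ} {Φ : ℝ → ℝ → Matrix (Fin n) (Fin n) ℝ} {B : ℝ → Matrix (Fin n) (Fin m) ℝ}
  {t₀ t₁ : ℝ} {v : Fin n → ℝ}

variable (Φ B t₀ t₁ v) in
noncomputable def minEnergyControl (t : ℝ) : Fin m → ℝ :=
  -((B t)ᵀ *ᵥ ((Φ t₀ t)ᵀ *ᵥ ((gram Φ B t₀ t₁)⁻¹ *ᵥ v)))

theorem minEnergyControl_dotProduct (t : ℝ) (x : Fin m → ℝ) :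
    minEnergyControl Φ B t₀ t₁ v t ⬝ᵥ x
      = -((gram Φ B t₀ t₁)⁻¹ *ᵥ v ⬝ᵥ Φ t₀ t *ᵥ (B t *ᵥ x)) := by
  simp only [minEnergyControl, neg_dotProduct, mulVec_transpose, dotProduct_mulVec, vecMul_vecMul]

theorem evolution_mulVec_minEnergyControl (t : ℝ) :
    Φ t₀ t *ᵥ (B t *ᵥ minEnergyControl Φ B t₀ t₁ v t)
      = -((Φ t₀ t * B t * (B t)ᵀ * (Φ t₀ t)ᵀ) *ᵥ ((gram Φ B t₀ t₁)⁻¹ *ᵥ v)) := by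
  simp only [minEnergyControl, mulVec_neg, mulVec_mulVec, Matrix.mul_assoc]

theorem integral_evolution_mulVec_minEnergyControl (hW : (gram Φ B t₀ t₁).PosDef) :
    ∫ t in t₀..t₁, Φ t₀ t *ᵥ (B t *ᵥ minEnergyControl Φ B t₀ t₁ v t) = -v := by
  have hG := intervalIntegrable_of_posDef_intervalIntegral hW
  simp only [evolution_mulVec_minEnergyControl, intervalIntegral.integral_neg,
    intervalIntegral_mulVec_const hG]
  rw [← _root_.gram, mulVec_mulVec, mul_nonsing_inv _ hW.det_pos.ne'.isUnit, one_mulVec]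

theorem integral_minEnergyControl_dotProduct {u : ℝ → Fin m → ℝ}
    (hu : ∫ t in t₀..t₁, Φ t₀ t *ᵥ (B t *ᵥ u t) = -v) :
    IntervalIntegrable (fun t => minEnergyControl Φ B t₀ t₁ v t ⬝ᵥ u t) volume t₀ t₁ ∧
      ∫ t in t₀..t₁, minEnergyControl Φ B t₀ t₁ v t ⬝ᵥ u t
        = (gram Φ B t₀ t₁)⁻¹ *ᵥ v ⬝ᵥ v := by
  simp only [minEnergyControl_dotProduct, intervalIntegral.integral_neg]
  by_cases hint : IntervalIntegrable (fun t => Φ t₀ t *ᵥ (B t *ᵥ u t)) volume t₀ t₁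
  · rw [intervalIntegral_const_dotProduct hint, hu, dotProduct_neg, neg_neg]
    exact ⟨(hint.const_dotProduct _).neg, rfl⟩
  · -- the integral is then the junk value `0`, which forces `v = 0`
    rw [intervalIntegral.integral_undef hint, zero_eq_neg] at hu
    simp [hu]

theorem integral_evolution_mulVec_eq_neg_of_steers (hΦ : ∀ a b c, Φ a b * Φ b c = Φ a c)
    (hΦ₁ : ∀ s, Φ s s = 1) {u : ℝ → Fin m → ℝ}
    (hsteer : Φ t₁ t₀ *ᵥ v + ∫ s in t₀..t₁, Φ t₁ s *ᵥ (B s *ᵥ u s) = 0) :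
    ∫ s in t₀..t₁, Φ t₀ s *ᵥ (B s *ᵥ u s) = -v :=
  calc ∫ s in t₀..t₁, Φ t₀ s *ᵥ (B s *ᵥ u s)
      = ∫ s in t₀..t₁, Φ t₀ t₁ *ᵥ (Φ t₁ s *ᵥ (B s *ᵥ u s)) := by
        simp only [mulVec_mulVec, ← Matrix.mul_assoc, hΦ]
    _ = Φ t₀ t₁ *ᵥ ∫ s in t₀..t₁, Φ t₁ s *ᵥ (B s *ᵥ u s) :=
      intervalIntegral_const_mulVec_of_mul_eq_one (by rw [hΦ, hΦ₁]) _
    _ = -v := by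
      rw [eq_neg_of_add_eq_zero_right hsteer, mulVec_neg, mulVec_mulVec, hΦ, hΦ₁, one_mulVec]

end MinimumEnergy

theorem stmt_8_general {n m : ℕ} (t₀ t₁ : ℝ) (ht : t₀ ≤ t₁)
    (A : ℝ → Matrix (Fin n) (Fin n) ℝ) (B : ℝ → Matrix (Fin n) (Fin m) ℝ)
    (hAc : Continuous A)
    (Φ : ℝ → ℝ → Matrix (Fin n) (Fin n) ℝ)
    (hΦderiv : ∀ s t : ℝ, HasDerivAt (fun r => Φ r s) (A t * Φ t s) t)
    (hΦinit : ∀ s : ℝ, Φ s s = 1)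
    (hW : (gram Φ B t₀ t₁).PosDef)
    (v : Fin n → ℝ)
    (ubar : ℝ → Fin m → ℝ)
    (hubar : ∀ t, ubar t = -((B t)ᵀ *ᵥ ((Φ t₀ t)ᵀ *ᵥ ((gram Φ B t₀ t₁)⁻¹ *ᵥ v)))) :
    (∫ t in t₀..t₁, ubar t ⬝ᵥ ubar t) = v ⬝ᵥ ((gram Φ B t₀ t₁)⁻¹ *ᵥ v) ∧
    ∀ u : ℝ → Fin m → ℝ,
      IntervalIntegrable u volume t₀ t₁ →
      IntervalIntegrable (fun t => u t ⬝ᵥ u t) volume t₀ t₁ →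
      Φ t₁ t₀ *ᵥ v + (∫ s in t₀..t₁, Φ t₁ s *ᵥ (B s *ᵥ u s)) = 0 →
      (∫ t in t₀..t₁, ubar t ⬝ᵥ ubar t) ≤ ∫ t in t₀..t₁, u t ⬝ᵥ u t := by
  obtain rfl : ubar = minEnergyControl Φ B t₀ t₁ v := funext hubar
  obtain ⟨hbar_int, hbar⟩ :=
    integral_minEnergyControl_dotProduct (integral_evolution_mulVec_minEnergyControl hW)
  refine ⟨hbar.trans (dotProduct_comm _ _), fun u _ hu hsteer => ?_⟩
  have hsteer₀ := integral_evolution_mulVec_eq_neg_of_steers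
    (evolution_mul_evolution hAc hΦderiv hΦinit) hΦinit hsteer
  obtain ⟨hbar_u_int, hbar_u⟩ := integral_minEnergyControl_dotProduct hsteer₀
  exact intervalIntegral_dotProduct_self_le_of_integral_dotProduct_eq ht hbar_int hu hbar_u_int
    (hbar_u.trans hbar.symm)

/-- among all square-integrable controls steering v at t₀ to 0 at t₁,
ū(t) = −B(t)ᵀΦ(t₀,t)ᵀW⁻¹v attains the minimal squared L² norm, and its squared L²
norm equals vᵀW⁻¹v. -/
theorem stmt_8 {n m : ℕ} (t₀ t₁ : ℝ) (ht : t₀ ≤ t₁)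
    (A : ℝ → Matrix (Fin n) (Fin n) ℝ) (B : ℝ → Matrix (Fin n) (Fin m) ℝ)
    (hAc : Continuous A) (hBc : Continuous B)
    (Φ : ℝ → ℝ → Matrix (Fin n) (Fin n) ℝ)
    (hΦderiv : ∀ s t : ℝ, HasDerivAt (fun r => Φ r s) (A t * Φ t s) t)
    (hΦinit : ∀ s : ℝ, Φ s s = 1)
    (hW : (gram Φ B t₀ t₁).PosDef)
    (v : Fin n → ℝ)
    (ubar : ℝ → Fin m → ℝ)
    (hubar : ∀ t, ubar t = -((B t)ᵀ *ᵥ ((Φ t₀ t)ᵀ *ᵥ ((gram Φ B t₀ t₁)⁻¹ *ᵥ v)))) :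
    (∫ t in t₀..t₁, ubar t ⬝ᵥ ubar t) = v ⬝ᵥ ((gram Φ B t₀ t₁)⁻¹ *ᵥ v) ∧
    ∀ u : ℝ → Fin m → ℝ,
      IntervalIntegrable u volume t₀ t₁ →
      IntervalIntegrable (fun t => u t ⬝ᵥ u t) volume t₀ t₁ →
      Φ t₁ t₀ *ᵥ v + (∫ s in t₀..t₁, Φ t₁ s *ᵥ (B s *ᵥ u s)) = 0 →
      (∫ t in t₀..t₁, ubar t ⬝ᵥ ubar t) ≤ ∫ t in t₀..t₁, u t ⬝ᵥ u t :=
  stmt_8_general t₀ t₁ ht A B hAc Φ hΦderiv hΦinit hW v ubar hubar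
end

section
/- Let Z : [0,T] → ℝ^{n×n} be continuous with evolution operator bound ‖Φ_Z(t,s)‖ ≤ c e^{−ρ(t−s)} for 0 ≤ s ≤ t ≤ T (c ≥ 1, ρ > 0), and let δv : [0,T] → ℝ^n satisfy ‖δv(s)‖ ≤ L e^{−ρ(t'−s)} for s ≤ t' and δv(s) = 0 for s > t', for some fixed t' ∈ [0,T] and L ≥ 0. Then for any continuous M : [0,T] → ℝ^{n×n} with ‖M(s)‖ ≤ μ, the function δx(t) = −∫₀ᵗ Φ_Z(t,s) M(s) δv(s) ds satisfies ‖δx(t)‖ ≤ (cLμ/(2ρ)) e^{−ρ|t−t'|} for all t ∈ [0,T]. -/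
/-!
Since operator norms are submultiplicative, the integrand is bounded by
`c μ L e^{−ρ(t−s)} e^{−ρ(t'−s)}` for `s ≤ t'` and vanishes for `s > t'`, so everything reduces to
the scalar integral `∫₀^{min(t,t')} e^{−ρ(t−s)} e^{−ρ(t'−s)} ds = e^{−ρ(t+t')}(e^{2ρ min(t,t')} − 1)/(2ρ)`,
which is at most `e^{−ρ|t−t'|}/(2ρ)` because `t + t' − 2 min(t,t') = |t − t'|`.
-/

open Matrix Set Real
open scoped Matrix.Norms.L2Operator

lemma Matrix.l2_opNorm_toEuclideanLin_apply {𝕜 m n : Type*} [RCLike 𝕜] [Fintype m] [Fintype n]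
    [DecidableEq n] (A : Matrix m n 𝕜) (x : EuclideanSpace 𝕜 n) :
    ‖toEuclideanLin A x‖ ≤ ‖A‖ * ‖x‖ :=
  A.l2_opNorm_mulVec x

lemma integral_exp_mul_exp {ρ : ℝ} (hρ : ρ ≠ 0) (t t' m : ℝ) :
    ∫ s in 0..m, exp (-ρ * (t - s)) * exp (-ρ * (t' - s)) =
      exp (-ρ * (t + t')) * (exp (2 * ρ * m) - 1) / (2 * ρ) := by
  have h2ρ : 2 * ρ ≠ 0 := mul_ne_zero two_ne_zero hρ
  have hkernel : ∀ s, exp (-ρ * (t - s)) * exp (-ρ * (t' - s)) =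
      exp (-ρ * (t + t')) * exp (2 * ρ * s) := fun s => by
    rw [← exp_add, ← exp_add]; ring_nf
  simp_rw [hkernel, intervalIntegral.integral_const_mul,
    intervalIntegral.integral_comp_mul_left (fun x => exp x) h2ρ, integral_exp]
  simp only [smul_eq_mul, mul_zero, exp_zero]
  field_simp

lemma integral_exp_mul_exp_min_le {ρ : ℝ} (hρ : 0 < ρ) (t t' : ℝ) :
    ∫ s in 0..min t t', exp (-ρ * (t - s)) * exp (-ρ * (t' - s)) ≤
      exp (-ρ * |t - t'|) / (2 * ρ) := by
  have habs : |t - t'| = t + t' - 2 * min t t' := by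
    rw [abs_sub_comm, ← max_sub_min_eq_abs, ← min_add_max t t']; ring
  rw [integral_exp_mul_exp hρ.ne', habs, show -ρ * (t + t' - 2 * min t t') =
    -ρ * (t + t') + 2 * ρ * min t t' by ring, exp_add]
  gcongr
  exact sub_le_self _ zero_le_one

theorem norm_integral_le_of_exp_convolution_bound {E : Type*} [NormedAddCommGroup E]
    [NormedSpace ℝ E] {F : ℝ → E} {K ρ t t' : ℝ} (hK : 0 ≤ K) (hρ : 0 < ρ) (ht : 0 ≤ t)
    (ht' : 0 ≤ t')
    (hF : ∀ s ∈ Ioc 0 t, s ≤ t' → ‖F s‖ ≤ K * (exp (-ρ * (t - s)) * exp (-ρ * (t' - s))))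
    (hF_zero : ∀ s ∈ Ioc 0 t, t' < s → F s = 0) :
    ‖∫ s in 0..t, F s‖ ≤ K * (exp (-ρ * |t - t'|) / (2 * ρ)) := by
  set k : ℝ → ℝ := fun s => K * (exp (-ρ * (t - s)) * exp (-ρ * (t' - s)))
  have hk : Continuous k := by fun_prop
  have hk_int : IntervalIntegrable ({s | s ≤ min t t'}.indicator k) MeasureTheory.volume 0 t := by
    rw [intervalIntegrable_iff]
    exact hk.integrableOn_uIoc.indicator measurableSet_Iic
  calc ‖∫ s in 0..t, F s‖ ≤ ∫ s in 0..t, {s | s ≤ min t t'}.indicator k s := by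
        refine intervalIntegral.norm_integral_le_of_norm_le ht (.of_forall fun s hs => ?_) hk_int
        by_cases hst' : s ≤ t'
        · rw [indicator_of_mem (show s ∈ {s | s ≤ min t t'} from le_min hs.2 hst')]
          exact hF s hs hst'
        · rw [indicator_of_notMem (show s ∉ {s | s ≤ min t t'} from
              fun h => hst' (h.trans (min_le_right _ _))),
            hF_zero s hs (not_le.1 hst'), norm_zero]
    _ = ∫ s in 0..min t t', k s :=
        intervalIntegral.integral_indicator ⟨le_min ht ht', min_le_left _ _⟩
    _ ≤ K * (exp (-ρ * |t - t'|) / (2 * ρ)) := by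
        rw [intervalIntegral.integral_const_mul]
        exact mul_le_mul_of_nonneg_left (integral_exp_mul_exp_min_le hρ t t') hK

theorem stmt_15_general {n : ℕ} (T c ρ L μ t' : ℝ) (hc : 1 ≤ c) (hρ : 0 < ρ)
    (hL : 0 ≤ L) (hμ : 0 ≤ μ) (ht' : t' ∈ Icc (0 : ℝ) T)
    (Φ : ℝ → ℝ → Matrix (Fin n) (Fin n) ℝ)
    (hΦbd : ∀ s t : ℝ, 0 ≤ s → s ≤ t → t ≤ T → ‖Φ t s‖ ≤ c * Real.exp (-ρ * (t - s)))
    (δv : ℝ → EuclideanSpace ℝ (Fin n))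
    (hδv1 : ∀ s ∈ Icc (0 : ℝ) T, s ≤ t' → ‖δv s‖ ≤ L * Real.exp (-ρ * (t' - s)))
    (hδv2 : ∀ s ∈ Icc (0 : ℝ) T, t' < s → δv s = 0)
    (M : ℝ → Matrix (Fin n) (Fin n) ℝ)
    (hMb : ∀ s ∈ Icc (0 : ℝ) T, ‖M s‖ ≤ μ)
    (δx : ℝ → EuclideanSpace ℝ (Fin n))
    (hδx : ∀ t, δx t = -∫ s in (0 : ℝ)..t,
      Matrix.toEuclideanLin (Φ t s) (Matrix.toEuclideanLin (M s) (δv s))) :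
    ∀ t ∈ Icc (0 : ℝ) T,
      ‖δx t‖ ≤ c * L * μ / (2 * ρ) * Real.exp (-ρ * |t - t'|) := by
  intro t ⟨ht0, htT⟩
  have hs_mem : ∀ s ∈ Ioc 0 t, s ∈ Icc 0 T := fun s hs => ⟨hs.1.le, hs.2.trans htT⟩
  have hbound : ∀ s ∈ Ioc 0 t, s ≤ t' →
      ‖toEuclideanLin (Φ t s) (toEuclideanLin (M s) (δv s))‖ ≤
        c * L * μ * (exp (-ρ * (t - s)) * exp (-ρ * (t' - s))) := fun s hs hst' =>
    calc _ ≤ ‖Φ t s‖ * (‖M s‖ * ‖δv s‖) :=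
          ((Φ t s).l2_opNorm_toEuclideanLin_apply _).trans
            (mul_le_mul_of_nonneg_left ((M s).l2_opNorm_toEuclideanLin_apply _) (norm_nonneg _))
      _ ≤ c * exp (-ρ * (t - s)) * (μ * (L * exp (-ρ * (t' - s)))) :=
          mul_le_mul (hΦbd s t hs.1.le hs.2 htT)
            (mul_le_mul (hMb s (hs_mem s hs)) (hδv1 s (hs_mem s hs) hst') (norm_nonneg _) hμ)
            (by positivity) (by positivity)
      _ = _ := by ring
  have hvanish : ∀ s ∈ Ioc 0 t, t' < s →
      toEuclideanLin (Φ t s) (toEuclideanLin (M s) (δv s)) = 0 := fun s hs hst' => by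
    rw [hδv2 s (hs_mem s hs) hst', map_zero, map_zero]
  rw [hδx, norm_neg, div_mul_eq_mul_div, mul_div_assoc]
  exact norm_integral_le_of_exp_convolution_bound (by positivity) hρ ht0 ht'.1 hbound hvanish

/-- the convolution estimate underlying exponential decay of
sensitivity: with ‖Φ_Z(t,s)‖ ≤ c e^{−ρ(t−s)}, ‖δv(s)‖ ≤ L e^{−ρ(t'−s)} for s ≤ t',
δv = 0 beyond t', and ‖M‖ ≤ μ, the function δx(t) = −∫₀ᵗ Φ_Z(t,s)M(s)δv(s) ds
satisfies ‖δx(t)‖ ≤ (cLμ/(2ρ)) e^{−ρ|t−t'|}. -/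
theorem stmt_15 {n : ℕ} (T c ρ L μ t' : ℝ) (hT : 0 ≤ T) (hc : 1 ≤ c) (hρ : 0 < ρ)
    (hL : 0 ≤ L) (hμ : 0 ≤ μ) (ht' : t' ∈ Icc (0 : ℝ) T)
    (Z : ℝ → Matrix (Fin n) (Fin n) ℝ) (hZc : ContinuousOn Z (Icc 0 T))
    (Φ : ℝ → ℝ → Matrix (Fin n) (Fin n) ℝ)
    (hΦderiv : ∀ s t : ℝ, HasDerivAt (fun r => Φ r s) (Z t * Φ t s) t)
    (hΦinit : ∀ s : ℝ, Φ s s = 1)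
    (hΦbd : ∀ s t : ℝ, 0 ≤ s → s ≤ t → t ≤ T → ‖Φ t s‖ ≤ c * Real.exp (-ρ * (t - s)))
    (δv : ℝ → EuclideanSpace ℝ (Fin n))
    (hδv1 : ∀ s ∈ Icc (0 : ℝ) T, s ≤ t' → ‖δv s‖ ≤ L * Real.exp (-ρ * (t' - s)))
    (hδv2 : ∀ s ∈ Icc (0 : ℝ) T, t' < s → δv s = 0)
    (M : ℝ → Matrix (Fin n) (Fin n) ℝ)
    (hMc : ContinuousOn M (Icc 0 T))
    (hMb : ∀ s ∈ Icc (0 : ℝ) T, ‖M s‖ ≤ μ)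
    (δx : ℝ → EuclideanSpace ℝ (Fin n))
    (hδx : ∀ t, δx t = -∫ s in (0 : ℝ)..t,
      Matrix.toEuclideanLin (Φ t s) (Matrix.toEuclideanLin (M s) (δv s))) :
    ∀ t ∈ Icc (0 : ℝ) T,
      ‖δx t‖ ≤ c * L * μ / (2 * ρ) * Real.exp (-ρ * |t - t'|) :=
  stmt_15_general T c ρ L μ t' hc hρ hL hμ ht' Φ hΦbd δv hδv1 hδv2 M hMb δx hδx
end
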